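/- In the preferential attachment model, for every i ≥ 1, lim_{n→∞} (1/a_n^{(i)}) Σ_{d=1}^i b_d^{(i)} (a_{n+1}^{(i)} ν_{n+1}(d) − a_n^{(i)} ν_n(d)) = b_1^{(i)}, where ν_n(d) = E[N_n(d)]. -/

import Mathlib

open MeasureTheory ProbabilityTheory Filter Finset

/-- The undirected preferential attachment model with parameter `δ > -1`.
`C n` is the node that node `n+1` attaches to (`0` meaning a self-loop),
`D n v` is the degree of node `v` in the graph `G n`, and `F` is the filtration
generated by the evolution of the graph. -/
structure PAModel {Ω : Type} (mΩ : MeasurableSpace Ω) (μ : Measure Ω) (δ : ℝ) : Type where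
  F : Filtration ℕ mΩ
  C : ℕ → Ω → ℕ
  D : ℕ → ℕ → Ω → ℕ
  C_le : ∀ n ω, 1 ≤ n → C n ω ≤ n
  C_meas : ∀ n, Measurable[F (n + 1)] (C n)
  D_one_one : ∀ ω, D 1 1 ω = 2
  D_one_ne : ∀ v ω, v ≠ 1 → D 1 v ω = 0
  D_meas : ∀ n v, Measurable[F n] (D n v)
  D_succ_old : ∀ n v ω, 1 ≤ v → v ≤ n →
    D (n + 1) v ω = D n v ω + if C n ω = v then 1 else 0
  D_succ_new : ∀ n ω, 1 ≤ n → D (n + 1) (n + 1) ω = if C n ω = 0 then 2 else 1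
  D_succ_out : ∀ n v ω, n + 1 < v → D (n + 1) v ω = 0
  attach_prob : ∀ n v, 1 ≤ v → v ≤ n →
    μ[Set.indicator {ω | C n ω = v} (fun _ => (1 : ℝ)) | F n]
      =ᵐ[μ] fun ω => ((D n v ω : ℝ) + δ) / (n * (2 + δ) + (1 + δ))
  self_prob : ∀ n, 1 ≤ n →
    μ[Set.indicator {ω | C n ω = 0} (fun _ => (1 : ℝ)) | F n]
      =ᵐ[μ] fun _ => (1 + δ) / (n * (2 + δ) + (1 + δ))

namespace PAModel

variable {Ω : Type} {mΩ : MeasurableSpace Ω} {μ : Measure Ω} {δ : ℝ}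

/-- `N n k` is the number of nodes of degree `k` in the graph `G n`. -/
noncomputable def N (M : PAModel mΩ μ δ) (n k : ℕ) (ω : Ω) : ℝ :=
  ((Finset.Icc 1 n).filter (fun v => M.D n v ω = k)).card

end PAModel

/-- `bcoef δ k j` is `b_j^{(k)} = (−1)^{k−j} Γ(k+δ)/((k−j)! Γ(j+δ))` for `j ≤ k`,
with the convention `b_j^{(k)} = 0` for `j > k`. -/
noncomputable def bcoef (δ : ℝ) (k j : ℕ) : ℝ :=
  if j ≤ k then
    (-1 : ℝ) ^ (k - j) * Real.Gamma (k + δ) / ((Nat.factorial (k - j)) * Real.Gamma (j + δ))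
  else 0

/-- `pk δ k` is the limiting degree frequency
`p_k = c(δ) Γ(k+δ)/Γ(k+3+2δ)` with `c(δ) = (2+δ)Γ(3+2δ)/Γ(1+δ)`, and `p_0 = 0`. -/
noncomputable def pk (δ : ℝ) (k : ℕ) : ℝ :=
  if k = 0 then 0
  else (2 + δ) * Real.Gamma (3 + 2 * δ) / Real.Gamma (1 + δ)
    * Real.Gamma (k + δ) / Real.Gamma (k + 3 + 2 * δ)

/-- `aseq δ k n` is `a_n^{(k)} = [∏_{i=k}^{n−1} (1 − (k+δ)/(i(2+δ)+1+δ))]⁻¹`. -/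
noncomputable def aseq (δ : ℝ) (k n : ℕ) : ℝ :=
  (∏ i ∈ Finset.Ico k n, (1 - ((k : ℝ) + δ) / (i * (2 + δ) + 1 + δ)))⁻¹

open scoped Topology

/-!
Write `ν_n(d) = E N_n(d)` and `c_n = n(2+δ) + (1+δ)`. Conditioning on `G_n`, every old node of
degree `d` keeps it with probability `1 - (d+δ)/c_n`, and one of degree `d-1` moves up to `d` with
probability `(d-1+δ)/c_n`, so for `n, d ≥ 1`
  `ν_{n+1}(d) = (1 - (d+δ)/c_n) ν_n(d) + (d-1+δ)/c_n ν_n(d-1) + P(D_{n+1}(n+1) = d)`.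
The identity `b_{d+1}^{(i)} (d+δ) = -(i-d) b_d^{(i)}` makes `∑_d b_d^{(i)} (⋯)` telescope, so
`b^{(i)}` is a left eigenvector of this recursion with eigenvalue `1 - (i+δ)/c_n = a_n/a_{n+1}`.
The expression therefore equals `(a_{n+1}/a_n) ∑_d b_d^{(i)} P(D_{n+1}(n+1) = d)`, which tends to
`b_1^{(i)}` because the new node has degree `1` with probability tending to `1`.
-/

lemma bcoef_succ_mul {δ : ℝ} (hδ : -1 < δ) {i d : ℕ} (hd : 1 ≤ d) (hdi : d ≤ i) :
    bcoef δ i (d + 1) * (d + δ) = -((i - d) * bcoef δ i d) := by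
  obtain rfl | hlt := hdi.eq_or_lt
  · simp [bcoef]
  obtain ⟨p, rfl⟩ : ∃ p, i = d + 1 + p := ⟨i - (d + 1), by omega⟩
  have hdδ : 0 < (d : ℝ) + δ := by
    have : (1 : ℝ) ≤ d := by exact_mod_cast hd
    linarith
  have hΓ := (Real.Gamma_pos_of_pos hdδ).ne'
  simp only [bcoef, if_pos (by omega : d + 1 ≤ d + 1 + p), if_pos hlt.le,
    show d + 1 + p - (d + 1) = p by omega, show d + 1 + p - d = p + 1 by omega,
    Nat.factorial_succ]
  push_cast
  rw [show (d : ℝ) + 1 + δ = (d + δ) + 1 by ring, Real.Gamma_add_one hdδ.ne']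
  field_simp
  ring

lemma sum_bcoef_telescope {δ : ℝ} (hδ : -1 < δ) (i : ℕ) {x : ℕ → ℝ} (hx : x 0 = 0) :
    ∑ d ∈ Icc 1 i, bcoef δ i d * ((i - d) * x d + (d - 1 + δ) * x (d - 1)) = 0 := by
  set G : ℕ → ℝ := fun j => bcoef δ i j * ((i - j) * x j)
  have hterm : ∀ j ∈ range i,
      bcoef δ i (j + 1) * ((i - (j + 1 : ℕ)) * x (j + 1) + ((j + 1 : ℕ) - 1 + δ) * x j)
        = G (j + 1) - G j := by
    intro j hj
    obtain rfl | hj0 := Nat.eq_zero_or_pos j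
    · simp [G, hx]
    · have := bcoef_succ_mul hδ hj0 (mem_range.mp hj).le
      simp only [G]
      push_cast
      linear_combination x j * this
  rw [← Ico_add_one_right_eq_Icc, sum_Ico_eq_sum_range, Nat.add_sub_cancel]
  simp only [add_comm 1, Nat.add_sub_cancel]
  rw [sum_congr rfl hterm, sum_range_sub]
  simp [G, hx]

lemma sum_bcoef_mul_step {δ : ℝ} (hδ : -1 < δ) (i : ℕ) (c : ℝ) {x : ℕ → ℝ}
    (hx : x 0 = 0) :
    ∑ d ∈ Icc 1 i, bcoef δ i d * ((1 - (d + δ) / c) * x d + (d - 1 + δ) / c * x (d - 1))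
      = (1 - (i + δ) / c) * ∑ d ∈ Icc 1 i, bcoef δ i d * x d := by
  rw [← sub_eq_zero, mul_sum, ← sum_sub_distrib]
  calc _ = c⁻¹ * ∑ d ∈ Icc 1 i,
          bcoef δ i d * ((i - d) * x d + (d - 1 + δ) * x (d - 1)) := by
          rw [mul_sum]
          exact sum_congr rfl fun d _ => by ring
    _ = 0 := by rw [sum_bcoef_telescope hδ i hx, mul_zero]

/-- The total attachment weight `∑_v (D_n(v) + δ) + (1 + δ)`; degrees in `G_n` sum to `2n`. -/
noncomputable def attachDenom (δ : ℝ) (n : ℕ) : ℝ := n * (2 + δ) + (1 + δ)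

noncomputable def newNodeDegreeProb (δ : ℝ) (n d : ℕ) : ℝ :=
  if d = 1 then 1 - (1 + δ) / attachDenom δ n
  else if d = 2 then (1 + δ) / attachDenom δ n else 0

section attachDenom

variable {δ : ℝ}

lemma attachDenom_pos (hδ : -1 < δ) (n : ℕ) : 0 < attachDenom δ n := by
  unfold attachDenom
  exact add_pos_of_nonneg_of_pos (mul_nonneg n.cast_nonneg (by linarith)) (by linarith)

lemma one_sub_div_attachDenom_pos (hδ : -1 < δ) {k n : ℕ} (hkn : k ≤ n) :
    0 < 1 - (k + δ) / attachDenom δ n := by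
  have hk : (k : ℝ) ≤ n := Nat.cast_le.mpr hkn
  rw [sub_pos, div_lt_one (attachDenom_pos hδ n), attachDenom]
  nlinarith [(n.cast_nonneg : (0 : ℝ) ≤ n)]

lemma tendsto_attachDenom (hδ : -1 < δ) : Tendsto (attachDenom δ) atTop atTop :=
  tendsto_atTop_add_const_right _ _
    (tendsto_natCast_atTop_atTop.atTop_mul_const (by linarith))

lemma tendsto_newNodeDegreeProb (hδ : -1 < δ) (d : ℕ) :
    Tendsto (fun n => newNodeDegreeProb δ n d) atTop (𝓝 (if d = 1 then 1 else 0)) := by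
  have h := tendsto_const_nhds (x := 1 + δ).div_atTop (tendsto_attachDenom hδ)
  unfold newNodeDegreeProb
  split_ifs
  · simpa using h.const_sub 1
  · exact h
  · exact tendsto_const_nhds

lemma aseq_pos (hδ : -1 < δ) (k n : ℕ) : 0 < aseq δ k n := by
  refine inv_pos.mpr (prod_pos fun j hj => ?_)
  have h := one_sub_div_attachDenom_pos hδ (mem_Ico.mp hj).1
  rwa [attachDenom, ← add_assoc] at h

lemma aseq_succ {k n : ℕ} (hkn : k ≤ n) :
    aseq δ k (n + 1) = aseq δ k n * (1 - (k + δ) / attachDenom δ n)⁻¹ := by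
  rw [aseq, aseq, prod_Ico_succ_top hkn, mul_inv, attachDenom, ← add_assoc]

end attachDenom

namespace PAModel

variable {Ω : Type} {mΩ : MeasurableSpace Ω} {μ : Measure Ω} {δ : ℝ} (M : PAModel mΩ μ δ)

lemma measurableSet_D_eq (n v d : ℕ) : MeasurableSet {ω | M.D n v ω = d} :=
  M.F.le n _ (M.D_meas n v (measurableSet_singleton d))

lemma measurableSet_C_eq (n v : ℕ) : MeasurableSet {ω | M.C n ω = v} :=
  M.F.le (n + 1) _ (M.C_meas n (measurableSet_singleton v))

lemma D_pos {n v : ℕ} (hv : 1 ≤ v) (hvn : v ≤ n) (ω : Ω) : 0 < M.D n v ω := by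
  induction n generalizing v with
  | zero => omega
  | succ m ih =>
    obtain rfl | hm := Nat.eq_zero_or_pos m
    · obtain rfl : v = 1 := by omega
      simp [M.D_one_one]
    obtain hvm | rfl := Nat.lt_succ_iff_lt_or_eq.mp (Nat.lt_succ_of_le hvn)
    · rw [M.D_succ_old m v ω hv (by omega)]
      exact Nat.add_pos_left (ih hv (by omega)) _
    · rw [M.D_succ_new m ω hm]
      split <;> omega

lemma N_zero (n : ℕ) (ω : Ω) : M.N n 0 ω = 0 := by
  simp only [N, Nat.cast_eq_zero, card_eq_zero, filter_eq_empty_iff, mem_Icc]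
  exact fun v hv => (M.D_pos hv.1 hv.2 ω).ne'

lemma integral_N [IsFiniteMeasure μ] (n k : ℕ) :
    ∫ ω, M.N n k ω ∂μ = ∑ v ∈ Icc 1 n, μ.real {ω | M.D n v ω = k} := by
  have hN : (M.N n k) = fun ω => ∑ v ∈ Icc 1 n, {ω | M.D n v ω = k}.indicator 1 ω := by
    ext ω
    rw [N, card_filter]
    push_cast
    exact sum_congr rfl fun v _ => by simp [Set.indicator_apply]
  rw [hN, integral_finsetSum _ fun v _ =>
    (integrable_const 1).indicator (M.measurableSet_D_eq n v k)]
  exact sum_congr rfl fun v _ => integral_indicator_one (M.measurableSet_D_eq n v k)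

lemma measureReal_D_eq_inter_C_eq [IsFiniteMeasure μ] {n v : ℕ} (hv : 1 ≤ v) (hvn : v ≤ n)
    (d : ℕ) :
    μ.real ({ω | M.D n v ω = d} ∩ {ω | M.C n ω = v})
      = (d + δ) / attachDenom δ n * μ.real {ω | M.D n v ω = d} := by
  set A := {ω | M.D n v ω = d}
  have hA : MeasurableSet[M.F n] A := M.D_meas n v (measurableSet_singleton d)
  calc μ.real (A ∩ {ω | M.C n ω = v})
      = ∫ ω in A, {ω | M.C n ω = v}.indicator 1 ω ∂μ := by
        rw [← integral_indicator (M.F.le n _ hA), Set.indicator_indicator,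
          integral_indicator_one ((M.F.le n _ hA).inter (M.measurableSet_C_eq n v))]
    _ = ∫ ω in A, ((M.D n v ω : ℝ) + δ) / attachDenom δ n ∂μ := by
        rw [← setIntegral_condExp (M.F.le n)
          ((integrable_const 1).indicator (M.measurableSet_C_eq n v)) hA]
        exact setIntegral_congr_ae (M.F.le n _ hA)
          ((M.attach_prob n v hv hvn).mono fun ω hω _ => hω)
    _ = (d + δ) / attachDenom δ n * μ.real A := by
        rw [setIntegral_congr_fun (M.F.le n _ hA) fun ω (hω : M.D n v ω = d) => by rw [hω],
          setIntegral_const, smul_eq_mul, mul_comm]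

lemma measureReal_C_eq_zero [IsProbabilityMeasure μ] {n : ℕ} (hn : 1 ≤ n) :
    μ.real {ω | M.C n ω = 0} = (1 + δ) / attachDenom δ n := by
  rw [← integral_indicator_one (M.measurableSet_C_eq n 0), Pi.one_def,
    ← integral_condExp (M.F.le n), integral_congr_ae (M.self_prob n hn)]
  simp [attachDenom]

lemma measureReal_D_succ_old [IsFiniteMeasure μ] {n v d : ℕ} (hv : 1 ≤ v) (hvn : v ≤ n)
    (hd : 1 ≤ d) :
    μ.real {ω | M.D (n + 1) v ω = d}
      = (1 - (d + δ) / attachDenom δ n) * μ.real {ω | M.D n v ω = d}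
        + (d - 1 + δ) / attachDenom δ n * μ.real {ω | M.D n v ω = d - 1} := by
  set A := {ω | M.D n v ω = d}
  set A' := {ω | M.D n v ω = d - 1}
  set B := {ω | M.C n ω = v}
  have hsplit : {ω | M.D (n + 1) v ω = d} = (A \ B) ∪ (A' ∩ B) := by
    ext ω
    by_cases hC : M.C n ω = v
    · simp [A, A', B, M.D_succ_old n v ω hv hvn, hC]
      omega
    · simp [A, A', B, M.D_succ_old n v ω hv hvn, hC]
  have hdisj : Disjoint (A \ B) (A' ∩ B) :=
    Set.disjoint_left.mpr fun ω h h' => h.2 h'.2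
  have hB := M.measurableSet_C_eq n v
  have hcast : ((d - 1 : ℕ) : ℝ) = d - 1 := by rw [Nat.cast_sub hd, Nat.cast_one]
  have hdiff : μ.real (A \ B) = μ.real A - μ.real (A ∩ B) :=
    eq_sub_of_add_eq (measureReal_sdiff_add_inter hB)
  rw [hsplit, measureReal_union hdisj ((M.measurableSet_D_eq n v _).inter hB), hdiff,
    M.measureReal_D_eq_inter_C_eq hv hvn, M.measureReal_D_eq_inter_C_eq hv hvn, hcast]
  ring

lemma measureReal_D_succ_self [IsProbabilityMeasure μ] {n : ℕ} (hn : 1 ≤ n) (d : ℕ) :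
    μ.real {ω | M.D (n + 1) (n + 1) ω = d} = newNodeDegreeProb δ n d := by
  have hS := M.measurableSet_C_eq n 0
  simp only [M.D_succ_new n _ hn, newNodeDegreeProb]
  split_ifs with h1 h2
  · subst h1
    rw [← M.measureReal_C_eq_zero hn, ← probReal_compl_eq_one_sub hS]
    congr 1; ext ω; simp
  · subst h2
    rw [← M.measureReal_C_eq_zero hn]
    congr 1; ext ω; simp
  · convert measureReal_empty (μ := μ)
    ext ω; simp only [Set.mem_ofPred_eq, Set.mem_empty_iff_false, iff_false]
    split <;> omega

lemma integral_N_succ [IsProbabilityMeasure μ] {n d : ℕ} (hn : 1 ≤ n) (hd : 1 ≤ d) :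
    ∫ ω, M.N (n + 1) d ω ∂μ
      = (1 - (d + δ) / attachDenom δ n) * ∫ ω, M.N n d ω ∂μ
        + (d - 1 + δ) / attachDenom δ n * ∫ ω, M.N n (d - 1) ω ∂μ
        + newNodeDegreeProb δ n d := by
  rw [M.integral_N, M.integral_N, M.integral_N, sum_Icc_succ_top (by omega),
    M.measureReal_D_succ_self hn, mul_sum, mul_sum, ← sum_add_distrib]
  congr 1
  exact sum_congr rfl fun v hv =>
    M.measureReal_D_succ_old (mem_Icc.mp hv).1 (mem_Icc.mp hv).2 hd

lemma aseq_inv_mul_sum_bcoef_eq [IsProbabilityMeasure μ] (hδ : -1 < δ) {i n : ℕ}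
    (hin : i ≤ n) (hn : 1 ≤ n) :
    (aseq δ i n)⁻¹ * ∑ d ∈ Icc 1 i, bcoef δ i d
        * (aseq δ i (n + 1) * ∫ ω, M.N (n + 1) d ω ∂μ
          - aseq δ i n * ∫ ω, M.N n d ω ∂μ)
      = (1 - (i + δ) / attachDenom δ n)⁻¹
        * ∑ d ∈ Icc 1 i, bcoef δ i d * newNodeDegreeProb δ n d := by
  set q := 1 - (i + δ) / attachDenom δ n
  have hq : q ≠ 0 := (one_sub_div_attachDenom_pos hδ hin).ne'
  have ha : aseq δ i n ≠ 0 := (aseq_pos hδ i n).ne'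
  have hstep : ∑ d ∈ Icc 1 i, bcoef δ i d * ∫ ω, M.N (n + 1) d ω ∂μ
      = q * ∑ d ∈ Icc 1 i, bcoef δ i d * ∫ ω, M.N n d ω ∂μ
        + ∑ d ∈ Icc 1 i, bcoef δ i d * newNodeDegreeProb δ n d := by
    rw [← sum_bcoef_mul_step hδ i _ (x := fun d => ∫ ω, M.N n d ω ∂μ)
      (by simp [M.N_zero]), ← sum_add_distrib]
    exact sum_congr rfl fun d hd => by rw [M.integral_N_succ hn (mem_Icc.mp hd).1]; ring
  have hsplit : ∑ d ∈ Icc 1 i, bcoef δ i d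
        * (aseq δ i (n + 1) * ∫ ω, M.N (n + 1) d ω ∂μ
          - aseq δ i n * ∫ ω, M.N n d ω ∂μ)
      = aseq δ i n * q⁻¹ * ∑ d ∈ Icc 1 i, bcoef δ i d * ∫ ω, M.N (n + 1) d ω ∂μ
        - aseq δ i n * ∑ d ∈ Icc 1 i, bcoef δ i d * ∫ ω, M.N n d ω ∂μ := by
    rw [mul_sum, mul_sum, ← sum_sub_distrib, aseq_succ hin]
    exact sum_congr rfl fun d _ => by ring
  rw [hsplit, hstep]
  field_simp
  ring

end PAModel

/-- For every `i ≥ 1`,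
`(1/a_n^{(i)}) ∑_{d=1}^i b_d^{(i)} (a_{n+1}^{(i)} ν_{n+1}(d) − a_n^{(i)} ν_n(d)) → b_1^{(i)}`
as `n → ∞`, where `ν_n(d) = E N_n(d)`. -/
theorem limit_deterministic_term {Ω : Type} {mΩ : MeasurableSpace Ω} {μ : Measure Ω}
    [IsProbabilityMeasure μ] {δ : ℝ} (hδ : -1 < δ) (M : PAModel mΩ μ δ)
    (i : ℕ) (hi : 1 ≤ i) :
    Tendsto
      (fun n : ℕ =>
        (aseq δ i n)⁻¹
          * ∑ d ∈ Finset.Icc 1 i,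
              bcoef δ i d
                * (aseq δ i (n + 1) * (∫ ω, M.N (n + 1) d ω ∂μ)
                    - aseq δ i n * (∫ ω, M.N n d ω ∂μ)))
      atTop (nhds (bcoef δ i 1)) := by
  have hq : Tendsto (fun n => (1 - (i + δ) / attachDenom δ n)⁻¹) atTop (𝓝 1) := by
    simpa using ((tendsto_const_nhds.div_atTop (tendsto_attachDenom hδ)).const_sub 1).inv₀
      (by norm_num : (1 : ℝ) - 0 ≠ 0)
  have hsource : Tendsto (fun n => ∑ d ∈ Icc 1 i, bcoef δ i d * newNodeDegreeProb δ n d) atTop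
      (𝓝 (bcoef δ i 1)) := by
    simpa [hi] using tendsto_finsetSum (Icc 1 i) fun d _ =>
      (tendsto_newNodeDegreeProb hδ d).const_mul (bcoef δ i d)
  refine (one_mul (bcoef δ i 1) ▸ hq.mul hsource).congr' ?_
  filter_upwards [eventually_ge_atTop (max i 1)] with n hn
  exact (M.aseq_inv_mul_sum_bcoef_eq hδ (le_of_max_le_left hn) (le_of_max_le_right hn)).symm
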